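/- If G is a graph with γ_g'(G) = 5, then for every edge e of G, γ_g'(G−e) ≥ 4. -/

import Mathlib

/-! Deleting edges only shrinks closed neighbourhoods, so a position `X ⊇ Q` of the game on `G`
is at least as advanced as a position `Q` of the game on a spanning subgraph `H`. Dominator plays
on `G` by imagining the game on `H`: Staller's first move is copied, and Dominator's optimal reply
in `H` is copied too, or replaced by any legal move if it dominates nothing new in `G`. After that,
every undominated vertex of the `H`-position finishes the game; Staller's third move in `G` need
not, but Dominator's fourth move on any still undominated vertex does. Hence `γ_g'(H) ≤ 3` forces
`γ_g'(G) ≤ 4`, which for `H = G − e` contradicts `γ_g'(G) = 5`. -/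

open Classical

noncomputable section

namespace DomGame

variable {V : Type*} [Fintype V]

/-- Closed neighborhood of `v` as a `Finset`. -/
noncomputable def N (G : SimpleGraph V) (v : V) : Finset V :=
  Finset.univ.filter (fun u => G.Adj v u ∨ u = v)

/-- Legal moves given the set `S` of already dominated vertices. -/
noncomputable def moves (G : SimpleGraph V) (S : Finset V) : Finset V :=
  Finset.univ.filter (fun v => ¬ N G v ⊆ S)

lemma card_lt {G : SimpleGraph V} {S : Finset V} (v : V) (hv : v ∈ moves G S) :
    (Finset.univ \ (S ∪ N G v)).card < (Finset.univ \ S).card := by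
  simp only [moves, Finset.mem_filter] at hv
  obtain ⟨u, hu, hus⟩ := Finset.not_subset.mp hv.2
  apply Finset.card_lt_card
  refine ⟨Finset.sdiff_subset_sdiff (le_refl _) Finset.subset_union_left, ?_⟩
  intro hsub
  have := hsub (Finset.mem_sdiff.mpr ⟨Finset.mem_univ u, hus⟩)
  rw [Finset.mem_sdiff, Finset.mem_union] at this
  exact this.2 (Or.inr hu)

mutual
/-- Number of moves with optimal play when it is Dominator's turn and
`S` is the set of already dominated vertices. -/
noncomputable def gameD (G : SimpleGraph V) (S : Finset V) : ℕ :=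
  if h : (moves G S).Nonempty then
    1 + (moves G S).attach.inf' (by simpa using h)
      (fun v => gameS G (S ∪ N G v.1))
  else 0
termination_by (Finset.univ \ S).card
decreasing_by exact card_lt v.1 v.2

/-- Number of moves with optimal play when it is Staller's turn. -/
noncomputable def gameS (G : SimpleGraph V) (S : Finset V) : ℕ :=
  if h : (moves G S).Nonempty then
    1 + (moves G S).attach.sup' (by simpa using h)
      (fun v => gameD G (S ∪ N G v.1))
  else 0
termination_by (Finset.univ \ S).card
decreasing_by exact card_lt v.1 v.2
end

/-- The (Dominator-start) game domination number. -/
noncomputable def gammaG (G : SimpleGraph V) : ℕ := gameD G ∅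

/-- The Staller-start game domination number. -/
noncomputable def gammaG' (G : SimpleGraph V) : ℕ := gameS G ∅

lemma self_mem_N (G : SimpleGraph V) (v : V) : v ∈ N G v := by
  simp [N]

lemma N_subset_N {G H : SimpleGraph V} (hHG : H ≤ G) (v : V) : N H v ⊆ N G v := by
  intro u
  simp only [N, Finset.mem_filter, Finset.mem_univ, true_and]
  exact Or.imp_left (@hHG v u)

lemma mem_moves_of_not_mem {G : SimpleGraph V} {S : Finset V} {x : V} (hx : x ∉ S) :
    x ∈ moves G S := by
  simp only [moves, Finset.mem_filter, Finset.mem_univ, true_and]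
  exact fun h => hx (h (self_mem_N G x))

lemma moves_nonempty_iff {G : SimpleGraph V} {S : Finset V} :
    (moves G S).Nonempty ↔ S ≠ Finset.univ := by
  refine ⟨fun ⟨v, hv⟩ hS => ?_, fun hS => ?_⟩
  · simp only [moves, Finset.mem_filter, hS, Finset.subset_univ] at hv
    exact hv.2 trivial
  · obtain ⟨x, hx⟩ : ∃ x, x ∉ S := by simpa [Finset.eq_univ_iff_forall] using hS
    exact ⟨x, mem_moves_of_not_mem hx⟩

lemma gameD_eq_zero_iff {G : SimpleGraph V} {S : Finset V} :
    gameD G S = 0 ↔ S = Finset.univ := by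
  rw [gameD]
  split_ifs with h
  · simpa using moves_nonempty_iff.mp h
  · simpa [moves_nonempty_iff] using h

lemma gameS_univ (G : SimpleGraph V) : gameS G Finset.univ = 0 := by
  rw [gameS, dif_neg (by simp [moves_nonempty_iff])]

lemma gameD_le (G : SimpleGraph V) {S : Finset V} {v : V} (hv : v ∈ moves G S) :
    gameD G S ≤ gameS G (S ∪ N G v) + 1 := by
  rw [gameD, dif_pos ⟨v, hv⟩, add_comm]
  gcongr
  exact Finset.inf'_le (fun w : moves G S => gameS G (S ∪ N G w))
    (Finset.mem_attach _ ⟨v, hv⟩)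

lemma exists_move_of_gameD_le {G : SimpleGraph V} {S : Finset V} {k : ℕ}
    (hS : S ≠ Finset.univ) (h : gameD G S ≤ k + 1) :
    ∃ u ∈ moves G S, gameS G (S ∪ N G u) ≤ k := by
  rw [gameD, dif_pos (moves_nonempty_iff.mpr hS), add_comm, Nat.add_le_add_iff_right,
    Finset.inf'_le_iff] at h
  obtain ⟨u, -, hu⟩ := h
  exact ⟨u, u.2, hu⟩

lemma le_gameS (G : SimpleGraph V) {S : Finset V} {v : V} (hv : v ∈ moves G S) :
    gameD G (S ∪ N G v) + 1 ≤ gameS G S := by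
  rw [gameS, dif_pos ⟨v, hv⟩, add_comm]
  gcongr
  exact Finset.le_sup' (fun w : moves G S => gameD G (S ∪ N G w))
    (Finset.mem_attach _ ⟨v, hv⟩)

lemma gameS_le {G : SimpleGraph V} {S : Finset V} {k : ℕ}
    (h : ∀ v ∈ moves G S, gameD G (S ∪ N G v) + 1 ≤ k) : gameS G S ≤ k := by
  rw [gameS]
  split_ifs with hne
  · obtain ⟨v₀, hv₀⟩ := hne
    obtain ⟨k, rfl⟩ := Nat.exists_eq_add_of_le' (le_of_add_le_right (h v₀ hv₀))
    rw [add_comm, Nat.add_le_add_iff_right]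
    exact Finset.sup'_le _ _ fun v _ => Nat.le_of_succ_le_succ (h v v.2)
  · exact Nat.zero_le k

lemma exists_mem_moves_union_N_subset {G : SimpleGraph V} {S : Finset V}
    (hS : S ≠ Finset.univ) (u : V) : ∃ w ∈ moves G S, S ∪ N G u ⊆ S ∪ N G w := by
  by_cases hu : N G u ⊆ S
  · obtain ⟨w, hw⟩ := moves_nonempty_iff.mpr hS
    exact ⟨w, hw, Finset.union_subset_iff.mpr ⟨Finset.subset_union_left,
      hu.trans Finset.subset_union_left⟩⟩
  · exact ⟨u, Finset.mem_filter.mpr ⟨Finset.mem_univ u, hu⟩, le_rfl⟩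

section SpanningSubgraph

variable {G H : SimpleGraph V} (hHG : H ≤ G)
include hHG

lemma gameD_le_one_of_subset {Q X : Finset V} (hQX : Q ⊆ X) (h : gameS H Q ≤ 1) :
    gameD G X ≤ 1 := by
  by_cases hX : X = Finset.univ
  · exact (gameD_eq_zero_iff.mpr hX).trans_le zero_le_one
  obtain ⟨x, hx⟩ : ∃ x, x ∉ X := by simpa [Finset.eq_univ_iff_forall] using hX
  have hQx : Q ∪ N H x = Finset.univ :=
    gameD_eq_zero_iff (G := H) |>.mp (by
      have := le_gameS H (mem_moves_of_not_mem fun hxQ => hx (hQX hxQ))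
      omega)
  have hXx : X ∪ N G x = Finset.univ :=
    Finset.univ_subset_iff.mp (hQx ▸ Finset.union_subset_union hQX (N_subset_N hHG x))
  simpa [hXx, gameS_univ] using gameD_le G (mem_moves_of_not_mem hx)

lemma gameS_le_two_of_subset {Q X : Finset V} (hQX : Q ⊆ X) (h : gameS H Q ≤ 1) :
    gameS G X ≤ 2 :=
  gameS_le fun _ _ =>
    Nat.succ_le_succ (gameD_le_one_of_subset hHG (hQX.trans Finset.subset_union_left) h)

lemma gameD_le_three_of_subset {Q P : Finset V} (hQP : Q ⊆ P) (h : gameD H Q ≤ 2) :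
    gameD G P ≤ 3 := by
  by_cases hP : P = Finset.univ
  · exact (gameD_eq_zero_iff.mpr hP).trans_le (by norm_num)
  have hQ : Q ≠ Finset.univ := fun hQ => hP (Finset.univ_subset_iff.mp (hQ ▸ hQP))
  obtain ⟨u, -, hu⟩ := exists_move_of_gameD_le hQ h
  obtain ⟨w, hw, huw⟩ := exists_mem_moves_union_N_subset (G := G) hP u
  have hsub : Q ∪ N H u ⊆ P ∪ N G w :=
    (Finset.union_subset_union hQP (N_subset_N hHG u)).trans huw
  calc gameD G P ≤ gameS G (P ∪ N G w) + 1 := gameD_le G hw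
    _ ≤ 3 := Nat.succ_le_succ (gameS_le_two_of_subset hHG hsub hu)

theorem gammaG'_le_four_of_le (h : gammaG' H ≤ 3) : gammaG' G ≤ 4 := by
  refine gameS_le fun v _ => ?_
  have hD : gameD H (∅ ∪ N H v) ≤ 2 := by
    have := le_gameS H (mem_moves_of_not_mem (Finset.notMem_empty v))
    unfold gammaG' at h
    omega
  have hsub : ∅ ∪ N H v ⊆ ∅ ∪ N G v := Finset.union_subset_union le_rfl (N_subset_N hHG v)
  have := gameD_le_three_of_subset hHG hsub hD
  omega

end SpanningSubgraph

end DomGame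

open DomGame in
/-- If `γ_g'(G) = 5`, then `γ_g'(G−e) ≥ 4` for every edge `e`. -/
theorem gameS_five_edge_removal {V : Type*} [Fintype V] (G : SimpleGraph V)
    (hG : gammaG' G = 5) (e : Sym2 V) (he : e ∈ G.edgeSet) :
    4 ≤ gammaG' (G.deleteEdges {e}) := by
  by_contra! h
  have := gammaG'_le_four_of_le (G.deleteEdges_le {e}) (Nat.le_of_lt_succ h)
  omega
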